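/- arXiv:1610.08644 — 2 statements merged into one kernel-verified Lean document; each statement's English description precedes it below -/
import Mathlib

section
/- Let c̃:ℝ₊→ℝ₊ be decreasing with lim_{x→∞} c̃(x)=c>0 where c < L'(0−). Then lim_{λ→∞} x*(λ, c̃(λ)·λ) = −H(c), where x*(λ,y) is the unique positive solution of U'(x)+λL'(−x)=y and H=(L')⁻¹. Moreover, λ↦x*(λ,cλ) converges to −H(c) monotonously from above (it is decreasing in λ). -/
/-!
Write `F_lam x = U' x + lam * L' (-x)`. Strict concavity of `U` and strict convexity of `L` make
`F_lam` strictly decreasing on `(0, ∞)`, so `x*(lam, y)` lies to the right of `x` exactly when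
`F_lam x > y`: every claim becomes a sign condition on `F_lam` at a fixed point.
With `z = H c`, `F_lam (-z) = U' (-z) + lam * c > c * lam` gives the lower bound. At
`x = x*(a, c a)`, `U' x > 0` forces `L' (-x) < c`, so `F_b x ≤ c b` for `b ≥ a`: the monotonicity.
For the limit, `F_lam x / lam = U' x / lam + L' (-x) → L' (-x)`, which lies below or above
`c = lim c̃` according as `x > -z` or `x < -z`.
-/

open Set Filter Topology

lemma StrictConvexOn.strictMonoOn_of_hasDerivAt {S : Set ℝ} {f f' : ℝ → ℝ}
    (hfc : StrictConvexOn ℝ S f) (hf : ∀ x ∈ S, HasDerivAt f (f' x) x) : StrictMonoOn f' S :=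
  (hfc.strictMonoOn_deriv fun x hx => (hf x hx).differentiableAt).congr
    fun x hx => (hf x hx).deriv

lemma StrictConcaveOn.strictAntiOn_of_hasDerivAt {S : Set ℝ} {f f' : ℝ → ℝ}
    (hfc : StrictConcaveOn ℝ S f) (hf : ∀ x ∈ S, HasDerivAt f (f' x) x) : StrictAntiOn f' S :=
  (hfc.strictAntiOn_deriv fun x hx => (hf x hx).differentiableAt).congr
    fun x hx => (hf x hx).deriv

lemma strictAntiOn_add_mul_comp_neg {U' L' : ℝ → ℝ} (hU' : StrictAntiOn U' (Ioi 0))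
    (hL' : StrictMonoOn L' (Iio 0)) {lam : ℝ} (hlam : 0 ≤ lam) :
    StrictAntiOn (fun x => U' x + lam * L' (-x)) (Ioi 0) := by
  intro x hx y hy hxy
  have hL'xy : L' (-y) ≤ L' (-x) :=
    (hL' (mem_Iio.2 (neg_lt_zero.2 hy)) (mem_Iio.2 (neg_lt_zero.2 hx)) (neg_lt_neg hxy)).le
  linarith [hU' hx hy hxy, mul_le_mul_of_nonneg_left hL'xy hlam]

section Optimum

variable {U' L' : ℝ → ℝ} {xstar : ℝ → ℝ → ℝ}
  (hU' : StrictAntiOn U' (Ioi 0)) (hL' : StrictMonoOn L' (Iio 0))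
  (hx : ∀ lam ≥ (0:ℝ), ∀ y > (0:ℝ),
    xstar lam y ∈ Ioi (0:ℝ) ∧ U' (xstar lam y) + lam * L' (-(xstar lam y)) = y)
include hU' hL' hx

lemma lt_xstar_of_lt {lam y x : ℝ} (hlam : 0 ≤ lam) (hy : 0 < y) (hx0 : 0 < x)
    (h : y < U' x + lam * L' (-x)) : x < xstar lam y := by
  obtain ⟨hxstar, hF⟩ := hx lam hlam y hy
  exact ((strictAntiOn_add_mul_comp_neg hU' hL' hlam).lt_iff_gt hxstar hx0).1 (hF.symm ▸ h)

lemma xstar_lt_of_lt {lam y x : ℝ} (hlam : 0 ≤ lam) (hy : 0 < y) (hx0 : 0 < x)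
    (h : U' x + lam * L' (-x) < y) : xstar lam y < x := by
  obtain ⟨hxstar, hF⟩ := hx lam hlam y hy
  exact ((strictAntiOn_add_mul_comp_neg hU' hL' hlam).lt_iff_gt hx0 hxstar).1 (hF.symm ▸ h)

lemma xstar_le_of_le {lam y x : ℝ} (hlam : 0 ≤ lam) (hy : 0 < y) (hx0 : 0 < x)
    (h : U' x + lam * L' (-x) ≤ y) : xstar lam y ≤ x := by
  obtain ⟨hxstar, hF⟩ := hx lam hlam y hy
  exact ((strictAntiOn_add_mul_comp_neg hU' hL' hlam).le_iff_ge hx0 hxstar).1 (hF.symm ▸ h)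

variable (hU'pos : ∀ x ∈ Ioi (0:ℝ), 0 < U' x)
include hU'pos

lemma neg_lt_xstar_mul {c z lam : ℝ} (hc : 0 < c) (hz : L' z = c) (hz0 : z < 0) (hlam : 0 < lam) :
    -z < xstar lam (c * lam) := by
  refine lt_xstar_of_lt hU' hL' hx hlam.le (mul_pos hc hlam) (neg_pos.2 hz0) ?_
  rw [neg_neg, hz]
  linarith [hU'pos (-z) (neg_pos.2 hz0)]

lemma xstar_mul_le_of_le {c a b : ℝ} (hc : 0 < c) (ha : 0 < a) (hab : a ≤ b) :
    xstar b (c * b) ≤ xstar a (c * a) := by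
  have hb : 0 < b := ha.trans_le hab
  obtain ⟨hxa, hFa⟩ := hx a ha.le (c * a) (mul_pos hc ha)
  refine xstar_le_of_le hU' hL' hx hb.le (mul_pos hc hb) hxa ?_
  have : a * (U' (xstar a (c * a)) + b * L' (-xstar a (c * a))) ≤ a * (c * b) := by
    nlinarith [hU'pos _ hxa]
  exact le_of_mul_le_mul_left this ha

lemma tendsto_xstar_mul_self {ct : ℝ → ℝ} {c z : ℝ} (hc : 0 < c) (hct : Tendsto ct atTop (𝓝 c))
    (hz : L' z = c) (hz0 : z < 0) :
    Tendsto (fun lam => xstar lam (ct lam * lam)) atTop (𝓝 (-z)) := by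
  have hlam : ∀ᶠ lam in atTop, (0:ℝ) < lam := eventually_gt_atTop 0
  have hctpos : ∀ᶠ lam in atTop, 0 < ct lam := hct.eventually_const_lt hc
  refine tendsto_order.2 ⟨fun p hp => ?_, fun q hq => ?_⟩
  · rcases le_or_gt p 0 with hp0 | hp0
    · filter_upwards [hlam, hctpos] with lam hlam hct0
      exact hp0.trans_lt (hx lam hlam.le _ (mul_pos hct0 hlam)).1
    have hcp : c < L' (-p) := hz ▸ hL' hz0 (mem_Iio.2 (neg_lt_zero.2 hp0)) (by linarith)
    filter_upwards [hlam, hctpos, hct.eventually_lt_const hcp] with lam hlam hct0 hctp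
    refine lt_xstar_of_lt hU' hL' hx hlam.le (mul_pos hct0 hlam) hp0 ?_
    nlinarith [hU'pos p hp0]
  · have hq0 : 0 < q := by linarith
    have hqc : L' (-q) < c := hz ▸ hL' (mem_Iio.2 (neg_lt_zero.2 hq0)) hz0 (by linarith)
    have hlim : Tendsto (fun lam => U' q / lam + L' (-q)) atTop (𝓝 (L' (-q))) := by
      simpa using (tendsto_const_nhds.div_atTop tendsto_id).add_const (L' (-q))
    filter_upwards [hlam, hctpos, hlim.eventually_lt hct hqc] with lam hlam hct0 hlt
    refine xstar_lt_of_lt hU' hL' hx hlam.le (mul_pos hct0 hlam) hq0 ?_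
    rw [div_add' _ _ _ hlam.ne', div_lt_iff₀ hlam] at hlt
    linarith

end Optimum

theorem stmt10_general (U U' L L' : ℝ → ℝ)
    -- U is a utility function
    (hUconc : StrictConcaveOn ℝ (Ioi (0:ℝ)) U)
    (hUderiv : ∀ x ∈ Ioi (0:ℝ), HasDerivAt U (U' x) x)
    (hU'pos : ∀ x ∈ Ioi (0:ℝ), 0 < U' x)
    -- L is a loss function
    (hLconv : StrictConvexOn ℝ (Iio (0:ℝ)) L)
    (hLderiv : ∀ x ∈ Iio (0:ℝ), HasDerivAt L (L' x) x)
    (l₀ : ℝ)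
    -- xstar lam y is the unique positive solution of U'(x) + lam * L'(-x) = y
    (xstar : ℝ → ℝ → ℝ)
    (hx : ∀ lam ≥ (0:ℝ), ∀ y > (0:ℝ),
      xstar lam y ∈ Ioi (0:ℝ) ∧ U' (xstar lam y) + lam * L' (-(xstar lam y)) = y)
    -- H is the inverse of L' on (0, L'(0-)) = (0, l₀)
    (H : ℝ → ℝ)
    (hH : ∀ e ∈ Ioo (0:ℝ) l₀, H e ∈ Iio (0:ℝ) ∧ L' (H e) = e)
    -- c̃ : ℝ₊ → ℝ₊ decreasing with limit c > 0
    (ctilde : ℝ → ℝ) (c : ℝ) (hc : 0 < c) (hcl : c < l₀)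
    (hctlim : Tendsto ctilde atTop (𝓝 c)) :
    Tendsto (fun lam => xstar lam (ctilde lam * lam)) atTop (𝓝 (-(H c))) ∧
    (∀ a b : ℝ, 0 < a → a ≤ b → xstar b (c * b) ≤ xstar a (c * a)) ∧
    (∀ lam > (0:ℝ), -(H c) ≤ xstar lam (c * lam)) := by
  have hU' := hUconc.strictAntiOn_of_hasDerivAt hUderiv
  have hL' := hLconv.strictMonoOn_of_hasDerivAt hLderiv
  obtain ⟨hHc0, hHc⟩ := hH c ⟨hc, hcl⟩
  exact ⟨tendsto_xstar_mul_self hU' hL' hx hU'pos hc hctlim hHc hHc0,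
    fun a b ha hab => xstar_mul_le_of_le hU' hL' hx hU'pos hc ha hab,
    fun lam hlam => (neg_lt_xstar_mul hU' hL' hx hU'pos hc hHc hHc0 hlam).le⟩

theorem stmt10 (U U' L L' : ℝ → ℝ)
    -- U is a utility function
    (hUmono : StrictMonoOn U (Ioi (0:ℝ)))
    (hUconc : StrictConcaveOn ℝ (Ioi (0:ℝ)) U)
    (hUderiv : ∀ x ∈ Ioi (0:ℝ), HasDerivAt U (U' x) x)
    (hU'cont : ContinuousOn U' (Ioi (0:ℝ)))
    (hU'pos : ∀ x ∈ Ioi (0:ℝ), 0 < U' x)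
    (hUInada0 : Tendsto U' (𝓝[>] (0:ℝ)) atTop)
    (hUInadaTop : Tendsto U' atTop (𝓝 (0:ℝ)))
    -- L is a loss function
    (hLmono : StrictMonoOn L (Iio (0:ℝ)))
    (hLconv : StrictConvexOn ℝ (Iio (0:ℝ)) L)
    (hLderiv : ∀ x ∈ Iio (0:ℝ), HasDerivAt L (L' x) x)
    (hL'cont : ContinuousOn L' (Iio (0:ℝ)))
    (l₀ : ℝ) (hL'0 : Tendsto L' (𝓝[<] (0:ℝ)) (𝓝 l₀))
    (hL'bot : Tendsto L' atBot (𝓝 (0:ℝ)))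
    -- xstar lam y is the unique positive solution of U'(x) + lam * L'(-x) = y
    (xstar : ℝ → ℝ → ℝ)
    (hx : ∀ lam ≥ (0:ℝ), ∀ y > (0:ℝ),
      xstar lam y ∈ Ioi (0:ℝ) ∧ U' (xstar lam y) + lam * L' (-(xstar lam y)) = y)
    (hxuniq : ∀ lam ≥ (0:ℝ), ∀ y > (0:ℝ), ∀ x ∈ Ioi (0:ℝ),
      U' x + lam * L' (-x) = y → x = xstar lam y)
    -- H is the inverse of L' on (0, L'(0-)) = (0, l₀)
    (H : ℝ → ℝ)
    (hL'range : ∀ x ∈ Iio (0:ℝ), L' x ∈ Ioo (0:ℝ) l₀)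
    (hH : ∀ e ∈ Ioo (0:ℝ) l₀, H e ∈ Iio (0:ℝ) ∧ L' (H e) = e)
    -- c̃ : ℝ₊ → ℝ₊ decreasing with limit c > 0
    (ctilde : ℝ → ℝ) (c : ℝ) (hc : 0 < c) (hcl : c < l₀)
    (hctnonneg : ∀ x ≥ (0:ℝ), 0 ≤ ctilde x)
    (hctanti : ∀ a b : ℝ, 0 ≤ a → a ≤ b → ctilde b ≤ ctilde a)
    (hctlim : Tendsto ctilde atTop (𝓝 c)) :
    Tendsto (fun lam => xstar lam (ctilde lam * lam)) atTop (𝓝 (-(H c))) ∧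
    (∀ a b : ℝ, 0 < a → a ≤ b → xstar b (c * b) ≤ xstar a (c * a)) ∧
    (∀ lam > (0:ℝ), -(H c) ≤ xstar lam (c * lam)) :=
  stmt10_general U U' L L' hUconc hUderiv hU'pos hLconv hLderiv l₀ xstar hx H hH ctilde c hc hcl
    hctlim
end

section
/- Let λ↦ŷ(λ) be a function on (0,∞) with values in (0,∞) such that for each λ, ŷ(λ) is the unique y>0 satisfying E[Z_T·x*(λ, yZ_T)]=x, where x*(λ,·) satisfies x*(αλ,αy)≤x*(λ,y) for α≥1 and y↦x*(λ,y) is strictly decreasing. Then λ↦ŷ(λ)/λ is decreasing on (0,∞), and hence lim_{λ→∞} ŷ(λ)/λ exists in [0,∞). -/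
/-! With `budget λ y = E[Z·x*(λ, yZ)]`, `ŷ(λ)` is the unique root of `budget λ · = x`, and
`budget λ ·` is antitone. For `λ ≤ μ` and `α = μ/λ ≥ 1`, the scaling inequality gives
`x = budget μ ŷ(μ) = budget (αλ) (α·λŷ(μ)/μ) ≤ budget λ (λŷ(μ)/μ)`, and a point where the
antitone map `budget λ ·` is at least `x` cannot lie beyond its unique root, so
`λŷ(μ)/μ ≤ ŷ(λ)`. A nonnegative antitone function has a limit at infinity. -/

open Set Filter Topology MeasureTheory

lemma le_of_le_of_antitoneOn_of_eq_unique {F : ℝ → ℝ} {x y r : ℝ} (hF : AntitoneOn F (Ioi 0))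
    (hr : 0 < r) (hFr : F r = x) (huniq : ∀ y > 0, F y = x → y = r) (hy : 0 < y)
    (hxy : x ≤ F y) : y ≤ r := by
  by_contra! hry
  have hFy : F y ≤ x := hFr ▸ hF hr hy hry.le
  exact hry.ne' (huniq y hy (le_antisymm hFy hxy))

lemma AntitoneOn.exists_tendsto_atTop_of_nonneg {f : ℝ → ℝ} (hf : AntitoneOn f (Ioi 0))
    (hf0 : ∀ t > 0, 0 ≤ f t) : ∃ l, 0 ≤ l ∧ Tendsto f atTop (𝓝 l) := by
  set g : ℝ → ℝ := fun t => f (max t 1)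
  have hmax_pos : ∀ t : ℝ, 0 < max t 1 := fun t => one_pos.trans_le (le_max_right t 1)
  have hg_anti : Antitone g := fun a b hab =>
    hf (hmax_pos a) (hmax_pos b) (max_le_max hab le_rfl)
  have hg0 : ∀ t, 0 ≤ g t := fun t => hf0 _ (hmax_pos t)
  refine ⟨⨅ t, g t, le_ciInf hg0, ?_⟩
  refine (tendsto_atTop_ciInf hg_anti ⟨0, ?_⟩).congr' ?_
  · rintro _ ⟨t, rfl⟩
    exact hg0 t
  · filter_upwards [eventually_ge_atTop (1 : ℝ)] with t ht
    simp only [g, max_eq_left ht]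

section Budget

variable {Ω : Type*} [MeasurableSpace Ω] {P : Measure Ω} {Z : Ω → ℝ} {xstar : ℝ → ℝ → ℝ}

noncomputable def budget (P : Measure Ω) (Z : Ω → ℝ) (xstar : ℝ → ℝ → ℝ) (lam y : ℝ) : ℝ :=
  ∫ ω, Z ω * xstar lam (y * Z ω) ∂P

lemma budget_antitoneOn {lam : ℝ} (hZpos : ∀ᵐ ω ∂P, 0 < Z ω)
    (hanti : AntitoneOn (xstar lam) (Ioi 0))
    (hint : ∀ y > 0, Integrable (fun ω => Z ω * xstar lam (y * Z ω)) P) :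
    AntitoneOn (budget P Z xstar lam) (Ioi 0) := by
  intro y₁ hy₁ y₂ hy₂ hle
  refine integral_mono_ae (hint y₂ hy₂) (hint y₁ hy₁) ?_
  filter_upwards [hZpos] with ω hω
  exact mul_le_mul_of_nonneg_left
    (hanti (mul_pos hy₁ hω) (mul_pos hy₂ hω) (mul_le_mul_of_nonneg_right hle hω.le)) hω.le

lemma budget_mul_mul_le {α lam y : ℝ} (hZpos : ∀ᵐ ω ∂P, 0 < Z ω) (hy : 0 < y)
    (hscale : ∀ z > 0, xstar (α * lam) (α * z) ≤ xstar lam z)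
    (hint_mul : Integrable (fun ω => Z ω * xstar (α * lam) (α * y * Z ω)) P)
    (hint : Integrable (fun ω => Z ω * xstar lam (y * Z ω)) P) :
    budget P Z xstar (α * lam) (α * y) ≤ budget P Z xstar lam y := by
  refine integral_mono_ae hint_mul hint ?_
  filter_upwards [hZpos] with ω hω
  rw [mul_assoc α]
  exact mul_le_mul_of_nonneg_left (hscale _ (mul_pos hy hω)) hω.le

end Budget

theorem stmt18_general {Ω : Type*} [MeasurableSpace Ω] (P : Measure Ω)
    (Z : Ω → ℝ) (hZpos : ∀ᵐ ω ∂P, 0 < Z ω)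
    (x : ℝ)
    (xstar : ℝ → ℝ → ℝ)
    -- y ↦ x*(λ,y) is strictly decreasing on (0,∞)
    (hxanti : ∀ lam ≥ (0:ℝ), ∀ y₁ y₂ : ℝ, 0 < y₁ → y₁ < y₂ → xstar lam y₂ < xstar lam y₁)
    -- x*(αλ, αy) ≤ x*(λ, y) for α ≥ 1
    (hxscale : ∀ α ≥ (1:ℝ), ∀ lam ≥ (0:ℝ), ∀ y > (0:ℝ),
      xstar (α * lam) (α * y) ≤ xstar lam y)
    (hint : ∀ lam > (0:ℝ), ∀ y > (0:ℝ),
      Integrable (fun ω => Z ω * xstar lam (y * Z ω)) P)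
    -- ŷ(λ) is the unique y > 0 with E[Z·x*(λ, yZ)] = x
    (yhat : ℝ → ℝ)
    (hyhat : ∀ lam > (0:ℝ), yhat lam > 0 ∧
      ∫ ω, Z ω * xstar lam (yhat lam * Z ω) ∂P = x)
    (hyuniq : ∀ lam > (0:ℝ), ∀ y > (0:ℝ),
      (∫ ω, Z ω * xstar lam (y * Z ω) ∂P = x) → y = yhat lam) :
    (∀ lam mu : ℝ, 0 < lam → lam ≤ mu → yhat mu / mu ≤ yhat lam / lam) ∧
    (∃ l : ℝ, 0 ≤ l ∧ Tendsto (fun lam => yhat lam / lam) atTop (𝓝 l)) := by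
  have hdecr : ∀ lam mu : ℝ, 0 < lam → lam ≤ mu → yhat mu / mu ≤ yhat lam / lam := by
    intro lam mu hlam hle
    have hmu : 0 < mu := hlam.trans_le hle
    obtain ⟨hŷμ_pos, hŷμ⟩ := hyhat mu hmu
    set α := mu / lam
    set y := lam * yhat mu / mu
    have hy : 0 < y := by positivity
    have hαlam : α * lam = mu := by simp only [α]; field_simp
    have hαy : α * y = yhat mu := by simp only [α, y]; field_simp
    have hx_le : x ≤ budget P Z xstar lam y := by
      have := budget_mul_mul_le hZpos hy (hxscale α ((one_le_div hlam).2 hle) lam hlam.le)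
        (by simpa only [hαlam, hαy] using hint mu hmu _ hŷμ_pos) (hint lam hlam y hy)
      rwa [hαlam, hαy, budget, hŷμ] at this
    have hanti : StrictAntiOn (xstar lam) (Ioi 0) := fun a ha b _ hab =>
      hxanti lam hlam.le a b ha hab
    have hy_le : y ≤ yhat lam :=
      le_of_le_of_antitoneOn_of_eq_unique
        (budget_antitoneOn hZpos hanti.antitoneOn (hint lam hlam))
        (hyhat lam hlam).1 (hyhat lam hlam).2 (hyuniq lam hlam) hy hx_le
    calc yhat mu / mu = y / lam := by simp only [y]; field_simp
      _ ≤ yhat lam / lam := div_le_div_of_nonneg_right hy_le hlam.le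
  refine ⟨hdecr, AntitoneOn.exists_tendsto_atTop_of_nonneg ?_ ?_⟩
  · exact fun lam hlam mu _ hle => hdecr lam mu hlam hle
  · exact fun lam hlam => (div_pos (hyhat lam hlam).1 hlam).le

theorem stmt18 {Ω : Type*} [MeasurableSpace Ω] (P : Measure Ω) [IsProbabilityMeasure P]
    (Z : Ω → ℝ) (hZpos : ∀ᵐ ω ∂P, 0 < Z ω) (hZint : Integrable Z P)
    (hZ1 : ∫ ω, Z ω ∂P = 1)
    (x : ℝ) (hx : 0 < x)
    (xstar : ℝ → ℝ → ℝ)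
    -- y ↦ x*(λ,y) is strictly decreasing on (0,∞)
    (hxanti : ∀ lam ≥ (0:ℝ), ∀ y₁ y₂ : ℝ, 0 < y₁ → y₁ < y₂ → xstar lam y₂ < xstar lam y₁)
    -- x*(αλ, αy) ≤ x*(λ, y) for α ≥ 1
    (hxscale : ∀ α ≥ (1:ℝ), ∀ lam ≥ (0:ℝ), ∀ y > (0:ℝ),
      xstar (α * lam) (α * y) ≤ xstar lam y)
    (hint : ∀ lam > (0:ℝ), ∀ y > (0:ℝ),
      Integrable (fun ω => Z ω * xstar lam (y * Z ω)) P)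
    -- ŷ(λ) is the unique y > 0 with E[Z·x*(λ, yZ)] = x
    (yhat : ℝ → ℝ)
    (hyhat : ∀ lam > (0:ℝ), yhat lam > 0 ∧
      ∫ ω, Z ω * xstar lam (yhat lam * Z ω) ∂P = x)
    (hyuniq : ∀ lam > (0:ℝ), ∀ y > (0:ℝ),
      (∫ ω, Z ω * xstar lam (y * Z ω) ∂P = x) → y = yhat lam) :
    (∀ lam mu : ℝ, 0 < lam → lam ≤ mu → yhat mu / mu ≤ yhat lam / lam) ∧
    (∃ l : ℝ, 0 ≤ l ∧ Tendsto (fun lam => yhat lam / lam) atTop (𝓝 l)) :=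
  stmt18_general P Z hZpos x xstar hxanti hxscale hint yhat hyhat hyuniq
end
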